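/- Let A be a unital C*-algebra and a ∈ A. For j = 1, 2 let D_j be a subset of ℝ and f_j : D_j → [0,∞) a map such that for every t ∈ D_j one has 1−t ∈ D_j and f_j(t)+f_j(1−t)=1. Then for all ξ₁ ∈ D₁, ξ₂ ∈ D₂ and all nonzero complex numbers α, β, γ: v(a)⁶ ≤ (max{1,|α−1|²}/(2|α|²))·‖(a*a)² + (aa*)²‖·‖a‖² + (f₁(1−ξ₁)·max{1,|β−1|²}/|αβ|²)·‖a²‖²·‖a‖² + (f₁(1−ξ₁)·f₂(1−ξ₂)/|αβ|²)·v(a³)² + (f₁(1−ξ₁)·(f₂(ξ₂)+2·max{1,|β−1|})/|αβ|²)·‖a²‖·‖a‖·v(a³) + ((f₁(ξ₁)+2·max{1,|α−1|})·max{1,|γ−1|}/(2|α|²|γ|))·‖a*a + aa*‖·‖a²‖·‖a‖² + ((f₁(ξ₁)+2·max{1,|α−1|})/(2|α|²|γ|))·‖a*a + aa*‖·‖a‖·v(a³). -/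

import Mathlib

open scoped ComplexOrder

/-- A state on a unital `C*`-algebra: a positive linear functional `φ` (equivalently, since the
algebra is complete, `φ (star b * b) ≥ 0` for all `b`) with `φ 1 = 1`. -/
def IsState {A : Type*} [CStarAlgebra A] (φ : A →ₗ[ℂ] ℂ) : Prop :=
  (∀ b : A, 0 ≤ φ (star b * b)) ∧ φ 1 = 1

/-- The numerical radius of an element of a unital `C*`-algebra:
`v(a) = sup { |φ(a)| : φ a state on A }`. -/
noncomputable def numRadius {A : Type*} [CStarAlgebra A] (a : A) : ℝ :=
  sSup {r : ℝ | ∃ φ : A →ₗ[ℂ] ℂ, IsState φ ∧ r = ‖φ a‖}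

/-!
For a state `φ`, the GNS semi-inner product `⟪x, y⟫ = φ (x⋆ y)` has `1` as a unit vector, so a
Buzano-type inequality gives `|α| |φ a|² ≤ max 1 |α - 1| ‖a‖_φ ‖a⋆‖_φ + |φ (a²)|` and
`|δ| |φ (a²)| |φ a| ≤ max 1 |δ - 1| ‖a²‖ ‖a‖ + |φ (a³)|`. Square the first inequality, write
`|φ (a²)|² = f₁ ξ₁ |φ (a²)|² + f₁ (1 - ξ₁) |φ (a²)|²` and use `|φ (a²)| ≤ ‖a‖_φ ‖a⋆‖_φ` on the first
summand; after multiplying by `|φ a|²`, bound `(‖a‖_φ ‖a⋆‖_φ)² ≤ ‖|a|⁴ + |a⋆|⁴‖ / 2`,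
`‖a‖_φ ‖a⋆‖_φ ≤ ‖|a|² + |a⋆|²‖ / 2`, and `|φ (a²)| |φ a|` by the second inequality, with `δ = γ`
in the cross term and with `δ = β`, squared and split by the weights of `f₂`, in the last one.
-/

open scoped InnerProductSpace

section InnerProductSpace

variable {𝕜 E : Type*} [RCLike 𝕜] [SeminormedAddCommGroup E] [InnerProductSpace 𝕜 E]

lemma norm_sq_eq_norm_inner_sq_add_norm_sub_sq {e : E} (he : ‖e‖ = 1) (x : E) :
    ‖x‖ ^ 2 = ‖⟪e, x⟫_𝕜‖ ^ 2 + ‖x - ⟪e, x⟫_𝕜 • e‖ ^ 2 := by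
  have hee : ⟪e, e⟫_𝕜 = 1 := by simp [inner_self_eq_norm_sq_to_K, he]
  have horth : ⟪⟪e, x⟫_𝕜 • e, x - ⟪e, x⟫_𝕜 • e⟫_𝕜 = 0 := by
    rw [inner_smul_left, inner_sub_right, inner_smul_right, hee, mul_one, sub_self, mul_zero]
  have := norm_add_sq_eq_norm_sq_add_norm_sq_of_inner_eq_zero _ _ horth
  rw [add_sub_cancel, norm_smul, he, mul_one] at this
  simpa only [sq] using this

/-- For `α = 2` this is Buzano's inequality. -/
lemma norm_mul_norm_inner_mul_inner_le {e : E} (he : ‖e‖ = 1) (x y : E) (α : 𝕜) :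
    ‖α‖ * ‖⟪y, e⟫_𝕜 * ⟪e, x⟫_𝕜‖ ≤ max 1 ‖α - 1‖ * (‖x‖ * ‖y‖) + ‖⟪y, x⟫_𝕜‖ := by
  set x' := x - ⟪e, x⟫_𝕜 • e
  set y' := y - ⟪e, y⟫_𝕜 • e
  have hee : ⟪e, e⟫_𝕜 = 1 := by simp [inner_self_eq_norm_sq_to_K, he]
  have hx := norm_sq_eq_norm_inner_sq_add_norm_sub_sq (𝕜 := 𝕜) he x
  have hy := norm_sq_eq_norm_inner_sq_add_norm_sub_sq (𝕜 := 𝕜) he y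
  have hxy' : ⟪y', x'⟫_𝕜 = ⟪y, x⟫_𝕜 - ⟪y, e⟫_𝕜 * ⟪e, x⟫_𝕜 := by
    simp only [x', y', inner_sub_left, inner_sub_right, inner_smul_left, inner_smul_right, hee,
      inner_conj_symm]
    ring
  have hsplit : α * (⟪y, e⟫_𝕜 * ⟪e, x⟫_𝕜) =
      (α - 1) * (⟪y, e⟫_𝕜 * ⟪e, x⟫_𝕜) - ⟪y', x'⟫_𝕜 + ⟪y, x⟫_𝕜 := by
    rw [hxy']; ring
  -- Cauchy–Schwarz in `ℝ²` for the components along `e` and orthogonal to `e`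
  have hcs : ‖⟪e, x⟫_𝕜‖ * ‖⟪e, y⟫_𝕜‖ + ‖x'‖ * ‖y'‖ ≤ ‖x‖ * ‖y‖ := by
    refine le_of_sq_le_sq ?_ (by positivity)
    rw [mul_pow, hx, hy]
    nlinarith [sq_nonneg (‖⟪e, x⟫_𝕜‖ * ‖y'‖ - ‖x'‖ * ‖⟪e, y⟫_𝕜‖)]
  have hM : ‖α - 1‖ ≤ max 1 ‖α - 1‖ := le_max_right _ _
  have hM1 : 1 ≤ max 1 ‖α - 1‖ := le_max_left _ _
  calc ‖α‖ * ‖⟪y, e⟫_𝕜 * ⟪e, x⟫_𝕜‖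
      = ‖(α - 1) * (⟪y, e⟫_𝕜 * ⟪e, x⟫_𝕜) - ⟪y', x'⟫_𝕜 + ⟪y, x⟫_𝕜‖ := by
        rw [← hsplit, norm_mul α]
    _ ≤ ‖α - 1‖ * (‖⟪e, x⟫_𝕜‖ * ‖⟪e, y⟫_𝕜‖) + ‖x'‖ * ‖y'‖ + ‖⟪y, x⟫_𝕜‖ := by
        grw [norm_add_le, norm_sub_le, norm_mul, norm_mul, norm_inner_symm y e,
          norm_inner_le_norm y' x']
        linarith
    _ ≤ max 1 ‖α - 1‖ * (‖x‖ * ‖y‖) + ‖⟪y, x⟫_𝕜‖ := by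
        grw [← hcs]
        nlinarith [mul_le_mul_of_nonneg_right hM (by positivity : 0 ≤ ‖⟪e, x⟫_𝕜‖ * ‖⟪e, y⟫_𝕜‖),
          mul_le_mul_of_nonneg_right hM1 (by positivity : 0 ≤ ‖x'‖ * ‖y'‖)]

end InnerProductSpace

lemma sq_le_of_le_mul_add {M p q w u t s : ℝ} (hM : 0 ≤ M) (hu : 0 ≤ u) (hq : 0 ≤ q)
    (hqp : q ≤ p) (hqw : q ≤ w) (ht : 0 ≤ t) (hs : 0 ≤ s) (hts : t + s = 1)
    (h : u ≤ M * p + q) :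
    u ^ 2 ≤ M ^ 2 * p ^ 2 + (2 * M + t) * (p * w) + s * w ^ 2 := by
  have hq2 : q ^ 2 ≤ t * (p * w) + s * w ^ 2 := by
    have : q ^ 2 = t * (q * q) + s * (q * q) := by linear_combination (q * q) * hts.symm
    rw [this, sq w]
    gcongr <;> linarith
  calc u ^ 2 ≤ (M * p + q) ^ 2 := by gcongr
    _ = M ^ 2 * p ^ 2 + 2 * M * (p * q) + q ^ 2 := by ring
    _ ≤ M ^ 2 * p ^ 2 + 2 * M * (p * w) + (t * (p * w) + s * w ^ 2) := by
        gcongr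
        linarith
    _ = _ := by ring

lemma max_one_sq {x : ℝ} (hx : 0 ≤ x) : max 1 (x ^ 2) = max 1 x ^ 2 := by
  simpa using ((pow_left_monotoneOn (n := 2)).map_max (Set.mem_Ici.2 zero_le_one)
    (Set.mem_Ici.2 hx)).symm

namespace PositiveLinearMap

variable {A : Type*} [CStarAlgebra A] [PartialOrder A] [StarOrderedRing A] (f : A →ₚ[ℂ] ℂ)

lemma inner_toPreGNS (x y : A) : ⟪f.toPreGNS x, f.toPreGNS y⟫_ℂ = f (star x * y) := rfl

lemma ofReal_norm_toPreGNS_sq (x : A) : ((‖f.toPreGNS x‖ ^ 2 : ℝ) : ℂ) = f (star x * x) := by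
  push_cast
  exact f.preGNS_norm_sq _

variable {f}

lemma norm_toPreGNS_one (hf : f 1 = 1) : ‖f.toPreGNS 1‖ = 1 := by
  rw [preGNS_norm_def]
  simp [hf]

lemma norm_toPreGNS_le (hf : f 1 = 1) (x : A) : ‖f.toPreGNS x‖ ≤ ‖x‖ := by
  refine le_of_sq_le_sq ?_ (norm_nonneg x)
  calc ‖f.toPreGNS x‖ ^ 2 = ‖f (star x * x)‖ := by
        rw [← ofReal_norm_toPreGNS_sq, Complex.norm_real, Real.norm_of_nonneg (by positivity)]
    _ ≤ ‖f 1‖ * ‖star x * x‖ := f.norm_apply_le_of_nonneg _ (star_mul_self_nonneg x)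
    _ = ‖x‖ ^ 2 := by rw [hf, norm_one, one_mul, CStarRing.norm_star_mul_self, sq]

lemma norm_apply_mul_le (x y : A) : ‖f (x * y)‖ ≤ ‖f.toPreGNS (star x)‖ * ‖f.toPreGNS y‖ := by
  simpa [inner_toPreGNS] using norm_inner_le_norm (𝕜 := ℂ) (f.toPreGNS (star x)) (f.toPreGNS y)

lemma norm_apply_le (hf : f 1 = 1) (x : A) : ‖f x‖ ≤ ‖x‖ := by
  have h := norm_apply_mul_le (f := f) 1 x
  rw [star_one, one_mul, norm_toPreGNS_one hf, one_mul] at h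
  exact h.trans (norm_toPreGNS_le hf x)

lemma norm_toPreGNS_sq_le (hf : f 1 = 1) (x : A) :
    ‖f.toPreGNS x‖ ^ 2 ≤ ‖f.toPreGNS (star x * x)‖ := by
  calc ‖f.toPreGNS x‖ ^ 2 = ‖f (1 * (star x * x))‖ := by
        rw [one_mul, ← ofReal_norm_toPreGNS_sq, Complex.norm_real,
          Real.norm_of_nonneg (by positivity)]
    _ ≤ ‖f.toPreGNS (star x * x)‖ := by
        simpa [norm_toPreGNS_one hf] using norm_apply_mul_le (f := f) 1 (star x * x)

lemma norm_toPreGNS_sq_add_sq_le (hf : f 1 = 1) (x y : A) :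
    ‖f.toPreGNS x‖ ^ 2 + ‖f.toPreGNS y‖ ^ 2 ≤ ‖star x * x + star y * y‖ := by
  have h : ((‖f.toPreGNS x‖ ^ 2 + ‖f.toPreGNS y‖ ^ 2 : ℝ) : ℂ) = f (star x * x + star y * y) := by
    rw [map_add, Complex.ofReal_add, ofReal_norm_toPreGNS_sq, ofReal_norm_toPreGNS_sq]
  calc ‖f.toPreGNS x‖ ^ 2 + ‖f.toPreGNS y‖ ^ 2 = ‖f (star x * x + star y * y)‖ := by
        rw [← h, Complex.norm_real, Real.norm_of_nonneg (by positivity)]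
    _ ≤ _ := norm_apply_le hf _

lemma norm_mul_norm_apply_mul_norm_apply_le (hf : f 1 = 1) (b c : A) (α : ℂ) :
    ‖α‖ * (‖f b‖ * ‖f c‖) ≤
      max 1 ‖α - 1‖ * (‖f.toPreGNS b‖ * ‖f.toPreGNS (star c)‖) + ‖f (c * b)‖ := by
  simpa [inner_toPreGNS, mul_comm ‖f b‖] using
    norm_mul_norm_inner_mul_inner_le (norm_toPreGNS_one hf) (f.toPreGNS b) (f.toPreGNS (star c)) α

lemma norm_apply_sq_le_norm_toPreGNS_mul (a : A) :
    ‖f (a ^ 2)‖ ≤ ‖f.toPreGNS a‖ * ‖f.toPreGNS (star a)‖ := by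
  simpa [sq, mul_comm ‖f.toPreGNS a‖] using norm_apply_mul_le (f := f) a a

lemma norm_toPreGNS_mul_norm_toPreGNS_star_sq_le (hf : f 1 = 1) (a : A) :
    (‖f.toPreGNS a‖ * ‖f.toPreGNS (star a)‖) ^ 2 ≤
      ‖(star a * a) ^ 2 + (a * star a) ^ 2‖ / 2 := by
  have h := norm_toPreGNS_sq_add_sq_le hf (star a * a) (a * star a)
  have ha := norm_toPreGNS_sq_le hf a
  have ha' := norm_toPreGNS_sq_le hf (star a)
  rw [star_star] at ha'
  simp only [star_mul, star_star, ← sq] at h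
  nlinarith [sq_nonneg (‖f.toPreGNS a‖ ^ 2 - ‖f.toPreGNS (star a)‖ ^ 2)]

lemma norm_toPreGNS_mul_norm_toPreGNS_star_le (hf : f 1 = 1) (a : A) :
    ‖f.toPreGNS a‖ * ‖f.toPreGNS (star a)‖ ≤ ‖star a * a + a * star a‖ / 2 := by
  have h := norm_toPreGNS_sq_add_sq_le hf a (star a)
  rw [star_star] at h
  nlinarith [sq_nonneg (‖f.toPreGNS a‖ - ‖f.toPreGNS (star a)‖)]

lemma norm_mul_norm_apply_sq_mul_norm_apply_le (hf : f 1 = 1) (a : A) (δ : ℂ) :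
    ‖δ‖ * (‖f (a ^ 2)‖ * ‖f a‖) ≤ max 1 ‖δ - 1‖ * (‖a ^ 2‖ * ‖a‖) + ‖f (a ^ 3)‖ := by
  have h := norm_mul_norm_apply_mul_norm_apply_le hf (a ^ 2) a δ
  rw [← pow_succ'] at h
  grw [norm_toPreGNS_le hf, norm_toPreGNS_le hf, norm_star] at h
  exact h

theorem norm_apply_pow_six_le (hf : f 1 = 1) (a : A) {t₁ u₁ t₂ u₂ : ℝ}
    (ht₁ : 0 ≤ t₁) (hu₁ : 0 ≤ u₁) (htu₁ : t₁ + u₁ = 1)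
    (ht₂ : 0 ≤ t₂) (hu₂ : 0 ≤ u₂) (htu₂ : t₂ + u₂ = 1)
    {α β γ : ℂ} (hα : α ≠ 0) (hβ : β ≠ 0) (hγ : γ ≠ 0) {v : ℝ} (hv : ‖f (a ^ 3)‖ ≤ v) :
    ‖f a‖ ^ 6 ≤
      max 1 (‖α - 1‖ ^ 2) / (2 * ‖α‖ ^ 2) *
          ‖(star a * a) ^ 2 + (a * star a) ^ 2‖ * ‖a‖ ^ 2
        + u₁ * max 1 (‖β - 1‖ ^ 2) / ‖α * β‖ ^ 2 * ‖a ^ 2‖ ^ 2 * ‖a‖ ^ 2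
        + u₁ * u₂ / ‖α * β‖ ^ 2 * v ^ 2
        + u₁ * (t₂ + 2 * max 1 (‖β - 1‖)) / ‖α * β‖ ^ 2 * ‖a ^ 2‖ * ‖a‖ * v
        + (t₁ + 2 * max 1 (‖α - 1‖)) * max 1 (‖γ - 1‖) / (2 * ‖α‖ ^ 2 * ‖γ‖) *
            ‖star a * a + a * star a‖ * ‖a ^ 2‖ * ‖a‖ ^ 2
        + (t₁ + 2 * max 1 (‖α - 1‖)) / (2 * ‖α‖ ^ 2 * ‖γ‖) *
            ‖star a * a + a * star a‖ * ‖a‖ * v := by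
  have hr : ‖f a‖ ≤ ‖a‖ := norm_apply_le hf a
  have hv₃ : ‖f (a ^ 3)‖ ≤ ‖a ^ 2‖ * ‖a‖ :=
    (norm_apply_le hf _).trans (pow_succ a 2 ▸ norm_mul_le _ _)
  have hbuz := norm_mul_norm_apply_sq_mul_norm_apply_le hf a
  have hbuz_α := norm_mul_norm_apply_mul_norm_apply_le hf a a α
  rw [← sq, ← sq] at hbuz_α
  have hbuz_α_sq := sq_le_of_le_mul_add (by positivity) (by positivity) (norm_nonneg _)
    (norm_apply_sq_le_norm_toPreGNS_mul a) le_rfl ht₁ hu₁ htu₁ hbuz_α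
  have hbuz_β_sq := sq_le_of_le_mul_add (by positivity) (by positivity) (norm_nonneg _) hv₃ hv
    ht₂ hu₂ htu₂ (hbuz β)
  have hm₂ := norm_toPreGNS_mul_norm_toPreGNS_star_sq_le hf a
  have hm := norm_toPreGNS_mul_norm_toPreGNS_star_le hf a
  set r := ‖f a‖
  set r₂ := ‖f (a ^ 2)‖
  set m := ‖f.toPreGNS a‖ * ‖f.toPreGNS (star a)‖
  set n := ‖a ^ 2‖ * ‖a‖
  have hαpos : 0 < ‖α‖ := norm_pos_iff.2 hα
  have hβpos : 0 < ‖β‖ := norm_pos_iff.2 hβ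
  have hγpos : 0 < ‖γ‖ := norm_pos_iff.2 hγ
  have hrr₂ : r₂ * r ≤ (max 1 ‖γ - 1‖ * n + v) / ‖γ‖ := by
    rw [le_div_iff₀ hγpos]; linarith [hbuz γ]
  have hrr₂_sq : (r₂ * r) ^ 2 ≤
      (max 1 ‖β - 1‖ ^ 2 * n ^ 2 + (2 * max 1 ‖β - 1‖ + t₂) * (n * v) + u₂ * v ^ 2) / ‖β‖ ^ 2 := by
    rw [le_div_iff₀ (by positivity)]; linarith
  rw [max_one_sq (norm_nonneg _), max_one_sq (norm_nonneg _), norm_mul]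
  calc r ^ 6 = (‖α‖ * r ^ 2) ^ 2 * r ^ 2 / ‖α‖ ^ 2 := by field_simp
    _ ≤ (max 1 ‖α - 1‖ ^ 2 * m ^ 2 + (2 * max 1 ‖α - 1‖ + t₁) * (m * r₂) + u₁ * r₂ ^ 2) * r ^ 2
          / ‖α‖ ^ 2 := by gcongr
    _ = (max 1 ‖α - 1‖ ^ 2 * (m ^ 2 * r ^ 2) + (2 * max 1 ‖α - 1‖ + t₁) * (m * (r₂ * r) * r)
          + u₁ * (r₂ * r) ^ 2) / ‖α‖ ^ 2 := by ring
    _ ≤ (max 1 ‖α - 1‖ ^ 2 * (‖(star a * a) ^ 2 + (a * star a) ^ 2‖ / 2 * ‖a‖ ^ 2)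
          + (2 * max 1 ‖α - 1‖ + t₁) * (‖star a * a + a * star a‖ / 2
              * ((max 1 ‖γ - 1‖ * n + v) / ‖γ‖) * ‖a‖)
          + u₁ * ((max 1 ‖β - 1‖ ^ 2 * n ^ 2 + (2 * max 1 ‖β - 1‖ + t₂) * (n * v)
              + u₂ * v ^ 2) / ‖β‖ ^ 2)) / ‖α‖ ^ 2 := by
          gcongr
          exact mul_nonneg (by positivity) ((by positivity : 0 ≤ r₂ * r).trans hrr₂)
    _ = _ := by field_simp; ring

end PositiveLinearMap

section State

variable {A : Type*} [CStarAlgebra A]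

noncomputable def IsState.toPositiveLinearMap [PartialOrder A] [StarOrderedRing A] {φ : A →ₗ[ℂ] ℂ}
    (hφ : IsState φ) : A →ₚ[ℂ] ℂ :=
  .mk₀ φ fun x hx ↦ by
    rw [StarOrderedRing.nonneg_iff] at hx
    induction hx using AddSubmonoid.closure_induction with
    | mem _ hy => obtain ⟨b, rfl⟩ := hy; exact hφ.1 b
    | zero => simp
    | add _ _ _ _ hy hz => rw [map_add]; exact add_nonneg hy hz

lemma IsState.norm_apply_le {φ : A →ₗ[ℂ] ℂ} (hφ : IsState φ) (x : A) : ‖φ x‖ ≤ ‖x‖ :=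
  let := CStarAlgebra.spectralOrder A
  have := CStarAlgebra.spectralOrderedRing A
  hφ.toPositiveLinearMap.norm_apply_le hφ.2 x

lemma IsState.norm_apply_le_numRadius {φ : A →ₗ[ℂ] ℂ} (hφ : IsState φ) (x : A) :
    ‖φ x‖ ≤ numRadius x :=
  le_csSup ⟨‖x‖, by rintro _ ⟨ψ, hψ, rfl⟩; exact hψ.norm_apply_le x⟩ ⟨φ, hφ, rfl⟩

lemma numRadius_nonneg (x : A) : 0 ≤ numRadius x :=
  Real.sSup_nonneg (by rintro _ ⟨φ, -, rfl⟩; exact norm_nonneg _)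

lemma numRadius_pow_le {x : A} {n : ℕ} (hn : n ≠ 0) {C : ℝ} (hC : 0 ≤ C)
    (h : ∀ φ : A →ₗ[ℂ] ℂ, IsState φ → ‖φ x‖ ^ n ≤ C) : numRadius x ^ n ≤ C := by
  have hroot : numRadius x ≤ C ^ (n⁻¹ : ℝ) := by
    refine Real.sSup_le ?_ (by positivity)
    rintro _ ⟨φ, hφ, rfl⟩
    rw [Real.le_rpow_inv_iff_of_pos (norm_nonneg _) hC (by positivity)]
    exact_mod_cast h φ hφ
  calc numRadius x ^ n ≤ (C ^ (n⁻¹ : ℝ)) ^ n := by gcongr; exact numRadius_nonneg x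
    _ = C := Real.rpow_inv_natCast_pow hC hn

end State

/-- Theorem 2.18: a family of upper bounds for `v(a)⁶`. -/
theorem numRadius_pow_six_le
    {A : Type*} [CStarAlgebra A] (a : A)
    (D₁ D₂ : Set ℝ) (f₁ f₂ : ℝ → ℝ)
    (hD₁ : ∀ t ∈ D₁, (1 - t) ∈ D₁) (hD₂ : ∀ t ∈ D₂, (1 - t) ∈ D₂)
    (hf₁_nonneg : ∀ t ∈ D₁, 0 ≤ f₁ t) (hf₂_nonneg : ∀ t ∈ D₂, 0 ≤ f₂ t)
    (hf₁ : ∀ t ∈ D₁, f₁ t + f₁ (1 - t) = 1) (hf₂ : ∀ t ∈ D₂, f₂ t + f₂ (1 - t) = 1)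
    (ξ₁ : ℝ) (hξ₁ : ξ₁ ∈ D₁) (ξ₂ : ℝ) (hξ₂ : ξ₂ ∈ D₂)
    (α β γ : ℂ) (hα : α ≠ 0) (hβ : β ≠ 0) (hγ : γ ≠ 0) :
    numRadius a ^ 6 ≤
      max 1 (‖α - 1‖ ^ 2) / (2 * ‖α‖ ^ 2) *
          ‖(star a * a) ^ 2 + (a * star a) ^ 2‖ * ‖a‖ ^ 2
        + f₁ (1 - ξ₁) * max 1 (‖β - 1‖ ^ 2) / ‖α * β‖ ^ 2 *
            ‖a ^ 2‖ ^ 2 * ‖a‖ ^ 2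
        + f₁ (1 - ξ₁) * f₂ (1 - ξ₂) / ‖α * β‖ ^ 2 * numRadius (a ^ 3) ^ 2
        + f₁ (1 - ξ₁) * (f₂ ξ₂ + 2 * max 1 (‖β - 1‖)) / ‖α * β‖ ^ 2 *
            ‖a ^ 2‖ * ‖a‖ * numRadius (a ^ 3)
        + (f₁ ξ₁ + 2 * max 1 (‖α - 1‖)) * max 1 (‖γ - 1‖) /
              (2 * ‖α‖ ^ 2 * ‖γ‖) *
            ‖star a * a + a * star a‖ * ‖a ^ 2‖ * ‖a‖ ^ 2
        + (f₁ ξ₁ + 2 * max 1 (‖α - 1‖)) /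
              (2 * ‖α‖ ^ 2 * ‖γ‖) *
            ‖star a * a + a * star a‖ * ‖a‖ * numRadius (a ^ 3) := by
  -- `CStarAlgebra` carries no order instance; any star-ordering serves to view states as positive.
  let := CStarAlgebra.spectralOrder A
  have := CStarAlgebra.spectralOrderedRing A
  have ht₁ := hf₁_nonneg ξ₁ hξ₁
  have hu₁ := hf₁_nonneg _ (hD₁ ξ₁ hξ₁)
  have ht₂ := hf₂_nonneg ξ₂ hξ₂
  have hu₂ := hf₂_nonneg _ (hD₂ ξ₂ hξ₂)
  have hv := numRadius_nonneg (a ^ 3)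
  refine numRadius_pow_le (by norm_num) (by bound) fun φ hφ ↦
    hφ.toPositiveLinearMap.norm_apply_pow_six_le hφ.2 a ht₁ hu₁ (hf₁ ξ₁ hξ₁) ht₂ hu₂ (hf₂ ξ₂ hξ₂)
      hα hβ hγ (hφ.norm_apply_le_numRadius _)
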